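/- Box-barrier property: Let f: ℤⁿ → ℝ ∪ {+∞} be integrally convex, p ∈ (ℤ ∪ {−∞})ⁿ, q ∈ (ℤ ∪ {+∞})ⁿ with p ≤ q. Let S = {x ∈ ℤⁿ : pᵢ < xᵢ < qᵢ ∀i} and let W be the set of integer points x with p ≤ x ≤ q having xᵢ = pᵢ or xᵢ = qᵢ for some i. If x̂ ∈ S ∩ dom f satisfies f(x̂) ≤ f(y) for all y ∈ W, then f(x̂) ≤ f(z) for all z ∈ ℤⁿ \ S. -/

import Mathlib

noncomputable section

def coeZR {n : ℕ} (z : Fin n → ℤ) : Fin n → ℝ := fun i => (z i : ℝ)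

def IntNbhd {n : ℕ} (x : Fin n → ℝ) : Set (Fin n → ℤ) :=
  {z | ∀ i, |x i - (z i : ℝ)| < 1}

def IntegrallyConvexSet {n : ℕ} (S : Set (Fin n → ℤ)) : Prop :=
  ∀ x ∈ convexHull ℝ (coeZR '' S), x ∈ convexHull ℝ (coeZR '' (S ∩ IntNbhd x))
def localConvexExt {n : ℕ} (f : (Fin n → ℤ) → EReal) (x : Fin n → ℝ) : EReal :=
  sInf { v : EReal | ∃ l : (Fin n → ℤ) →₀ ℝ,
    (∀ z, 0 ≤ l z) ∧ (∀ z ∈ l.support, z ∈ IntNbhd x) ∧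
    (l.sum fun _ a => a) = 1 ∧
    (l.sum fun z a => a • coeZR z) = x ∧
    v = l.sum fun z a => (a : EReal) * f z }

def ERealConvexOn {n : ℕ} (g : (Fin n → ℝ) → EReal) : Prop :=
  ∀ x y : Fin n → ℝ, ∀ a b : ℝ, 0 ≤ a → 0 ≤ b → a + b = 1 →
    g (a • x + b • y) ≤ (a : EReal) * g x + (b : EReal) * g y

def IntegrallyConvexFn {n : ℕ} (f : (Fin n → ℤ) → EReal) : Prop :=
  ERealConvexOn (localConvexExt f)

/-!
Join `xh` to `z` by a segment. As `xh` lies in the open real box cut out by `p` and `q` and `z`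
does not, the segment meets the boundary of that box at a point `y = a • xh + b • z` with `b > 0`.
Every integer point of `IntNbhd y` lies in `W`, so `f̃ y ≥ f xh`, where `f̃` is the local convex
extension. Convexity of `f̃` and `f̃ ≤ f` on integer points give `f̃ y ≤ a * f xh + b * f z`,
hence `f xh ≤ f z`.
-/

theorem EReal.coe_finset_sum {ι : Type*} (s : Finset ι) (g : ι → ℝ) :
    ((∑ i ∈ s, g i : ℝ) : EReal) = ∑ i ∈ s, (g i : EReal) :=
  map_sum (⟨⟨Real.toEReal, EReal.coe_zero⟩, EReal.coe_add⟩ : ℝ →+ EReal) g s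

theorem EReal.coe_le_of_coe_le_mul_add_mul {c : ℝ} {e : EReal} {a b : ℝ} (hb : 0 < b)
    (hab : a + b = 1) (h : (c : EReal) ≤ a * c + b * e) : (c : EReal) ≤ e := by
  induction e using EReal.rec with
  | bot =>
    rw [EReal.coe_mul_bot_of_pos hb, EReal.add_bot] at h
    exact absurd h (by simp)
  | top => exact le_top
  | coe r =>
    rw [← EReal.coe_mul, ← EReal.coe_mul, ← EReal.coe_add, EReal.coe_le_coe_iff] at h
    obtain rfl : a = 1 - b := by linarith
    exact EReal.coe_le_coe_iff.mpr (le_of_mul_le_mul_left (by linarith) hb)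

theorem localConvexExt_coeZR_le {n : ℕ} (f : (Fin n → ℤ) → EReal) (x : Fin n → ℤ) :
    localConvexExt f (coeZR x) ≤ f x := by
  refine sInf_le ⟨Finsupp.single x 1, fun w => ?_, fun w hw => ?_, ?_, ?_, ?_⟩
  · classical
    rw [Finsupp.single_apply]
    split_ifs <;> norm_num
  · obtain rfl : w = x := by simpa using Finsupp.support_single_subset hw
    simp [IntNbhd, coeZR]
  all_goals simp [Finsupp.sum_single_index]

theorem coe_le_localConvexExt {n : ℕ} {f : (Fin n → ℤ) → EReal} {y : Fin n → ℝ} {c : ℝ}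
    (h : ∀ w ∈ IntNbhd y, (c : EReal) ≤ f w) : (c : EReal) ≤ localConvexExt f y := by
  refine le_sInf ?_
  rintro v ⟨l, hl_nonneg, hl_supp, hl_sum, -, rfl⟩
  have hc : (c : EReal) = ∑ w ∈ l.support, ((l w * c : ℝ) : EReal) := by
    rw [← EReal.coe_finset_sum, ← Finset.sum_mul]
    simp only [Finsupp.sum] at hl_sum
    rw [hl_sum, one_mul]
  rw [hc, Finsupp.sum]
  refine Finset.sum_le_sum fun w hw => ?_
  rw [EReal.coe_mul]
  exact mul_le_mul_of_nonneg_left (h w (hl_supp w hw)) (EReal.coe_nonneg.mpr (hl_nonneg w))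

theorem IntegrallyConvexFn.le_of_forall_intNbhd_le {n : ℕ} {f : (Fin n → ℤ) → EReal}
    (hf : IntegrallyConvexFn f) {x z : Fin n → ℤ} {a b : ℝ} (ha : 0 ≤ a) (hb : 0 < b)
    (hab : a + b = 1) (hx : f x ≠ ⊤)
    (hy : ∀ w ∈ IntNbhd (a • coeZR x + b • coeZR z), f x ≤ f w) : f x ≤ f z := by
  rcases eq_bot_or_bot_lt (f x) with hbot | hbot
  · exact hbot ▸ bot_le
  obtain ⟨c, hc⟩ : ∃ c : ℝ, (c : EReal) = f x := ⟨_, EReal.coe_toReal hx hbot.ne'⟩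
  rw [← hc] at hy ⊢
  refine EReal.coe_le_of_coe_le_mul_add_mul hb hab ?_
  calc (c : EReal) ≤ localConvexExt f (a • coeZR x + b • coeZR z) := coe_le_localConvexExt hy
    _ ≤ a * localConvexExt f (coeZR x) + b * localConvexExt f (coeZR z) :=
      hf _ _ a b ha hb.le hab
    _ ≤ a * c + b * f z := by
      rw [hc]
      exact add_le_add
        (mul_le_mul_of_nonneg_left (localConvexExt_coeZR_le f x) (EReal.coe_nonneg.mpr ha))
        (mul_le_mul_of_nonneg_left (localConvexExt_coeZR_le f z) (EReal.coe_nonneg.mpr hb.le))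

theorem exists_smul_add_smul_mem_closure_diff {E : Type*} [AddCommGroup E] [Module ℝ E]
    [TopologicalSpace E] [ContinuousAdd E] [ContinuousSMul ℝ E] {U : Set E} (hU : IsOpen U)
    {x z : E} (hx : x ∈ U) (hz : z ∉ U) :
    ∃ a b : ℝ, 0 ≤ a ∧ 0 < b ∧ a + b = 1 ∧ a • x + b • z ∈ closure U \ U := by
  obtain ⟨y, hy_seg, hy_closure, hyU⟩ : ∃ y ∈ segment ℝ x z, y ∈ closure U ∧ y ∉ U := by
    by_contra! h
    have hz_closure : z ∈ (closure U)ᶜ := fun hzc => hz (h z (right_mem_segment ℝ x z) hzc)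
    obtain ⟨y, -, hyU, hy_closure⟩ := (convex_segment x z).isPreconnected U (closure U)ᶜ hU
      isClosed_closure.isOpen_compl
      (fun y hy => (em (y ∈ U)).imp_right fun hyU hyc => hyU (h y hy hyc))
      ⟨x, left_mem_segment ℝ x z, hx⟩ ⟨z, right_mem_segment ℝ x z, hz_closure⟩
    exact hy_closure (subset_closure hyU)
  obtain ⟨a, b, ha, hb, hab, rfl⟩ := hy_seg
  refine ⟨a, b, ha, hb.lt_of_ne ?_, hab, hy_closure, hyU⟩
  rintro rfl
  obtain rfl : a = 1 := by simpa using hab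
  simp [hx] at hyU

def WithBot.intToEReal : WithBot ℤ → EReal
  | ⊥ => ⊥
  | (a : ℤ) => ((a : ℝ) : EReal)

def WithTop.intToEReal : WithTop ℤ → EReal
  | ⊤ => ⊤
  | (b : ℤ) => ((b : ℝ) : EReal)

theorem Int.le_of_cast_le_of_abs_sub_lt_one {a v : ℤ} {y : ℝ} (h : (a : ℝ) ≤ y)
    (hv : |y - v| < 1) : a ≤ v := by
  have : (a : ℝ) < v + 1 := by linarith [(abs_lt.mp hv).2]
  exact Int.lt_add_one_iff.mp (by exact_mod_cast this)

theorem Int.le_of_le_cast_of_abs_sub_lt_one {b v : ℤ} {y : ℝ} (h : y ≤ b)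
    (hv : |y - v| < 1) : v ≤ b := by
  have : (v : ℝ) < b + 1 := by linarith [(abs_lt.mp hv).1]
  exact Int.lt_add_one_iff.mp (by exact_mod_cast this)

namespace WithBot

theorem intToEReal_lt_coe_iff {p : WithBot ℤ} {x : ℤ} :
    p.intToEReal < ((x : ℝ) : EReal) ↔ p < x := by
  induction p <;> simp [intToEReal]

theorem le_of_intToEReal_le {p : WithBot ℤ} {y : ℝ} {v : ℤ} (h : p.intToEReal ≤ y)
    (hv : |y - v| < 1) : p ≤ v := by
  induction p with
  | bot => exact bot_le
  | coe a =>
    exact coe_le_coe.mpr (Int.le_of_cast_le_of_abs_sub_lt_one (by simpa [intToEReal] using h) hv)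

theorem eq_of_intToEReal_eq {p : WithBot ℤ} {y : ℝ} {v : ℤ} (h : p.intToEReal = y)
    (hv : |y - v| < 1) : (v : WithBot ℤ) = p := by
  induction p with
  | bot => simp [intToEReal] at h
  | coe a =>
    have hay : (a : ℝ) = y := by simpa [intToEReal] using h
    exact coe_eq_coe.mpr (le_antisymm (Int.le_of_le_cast_of_abs_sub_lt_one hay.ge hv)
      (Int.le_of_cast_le_of_abs_sub_lt_one hay.le hv))

end WithBot

namespace WithTop

theorem coe_lt_intToEReal_iff {q : WithTop ℤ} {x : ℤ} :
    ((x : ℝ) : EReal) < q.intToEReal ↔ (x : WithTop ℤ) < q := by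
  induction q <;> simp [intToEReal]

theorem le_of_le_intToEReal {q : WithTop ℤ} {y : ℝ} {v : ℤ} (h : (y : EReal) ≤ q.intToEReal)
    (hv : |y - v| < 1) : (v : WithTop ℤ) ≤ q := by
  induction q with
  | top => exact le_top
  | coe b =>
    exact coe_le_coe.mpr (Int.le_of_le_cast_of_abs_sub_lt_one (by simpa [intToEReal] using h) hv)

theorem eq_of_eq_intToEReal {q : WithTop ℤ} {y : ℝ} {v : ℤ} (h : (y : EReal) = q.intToEReal)
    (hv : |y - v| < 1) : (v : WithTop ℤ) = q := by
  induction q with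
  | top => simp [intToEReal] at h
  | coe b =>
    have hby : y = b := by simpa [intToEReal] using h
    exact coe_eq_coe.mpr (le_antisymm (Int.le_of_le_cast_of_abs_sub_lt_one hby.le hv)
      (Int.le_of_cast_le_of_abs_sub_lt_one hby.ge hv))

end WithTop

section Box

variable {ι : Type*} {p : ι → WithBot ℤ} {q : ι → WithTop ℤ}

def openBox (p : ι → WithBot ℤ) (q : ι → WithTop ℤ) : Set (ι → ℝ) :=
  Set.univ.pi fun i => Real.toEReal ⁻¹' Set.Ioo (p i).intToEReal (q i).intToEReal

theorem isOpen_openBox [Finite ι] : IsOpen (openBox p q) :=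
  isOpen_set_pi Set.finite_univ fun _ _ => isOpen_Ioo.preimage continuous_coe_real_ereal

theorem closure_openBox_subset :
    closure (openBox p q) ⊆
      Set.univ.pi fun i => Real.toEReal ⁻¹' Set.Icc (p i).intToEReal (q i).intToEReal :=
  closure_minimal (Set.pi_mono fun _ _ => Set.preimage_mono Set.Ioo_subset_Icc_self)
    (isClosed_set_pi fun _ _ => isClosed_Icc.preimage continuous_coe_real_ereal)

end Box

def intBoxBoundary {n : ℕ} (p : Fin n → WithBot ℤ) (q : Fin n → WithTop ℤ) : Set (Fin n → ℤ) :=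
  {x | (∀ i, p i ≤ (x i : WithBot ℤ) ∧ (x i : WithTop ℤ) ≤ q i) ∧
    ∃ i, (x i : WithBot ℤ) = p i ∨ (x i : WithTop ℤ) = q i}

theorem preimage_coeZR_openBox {n : ℕ} (p : Fin n → WithBot ℤ) (q : Fin n → WithTop ℤ) :
    coeZR ⁻¹' openBox p q =
      {x | ∀ i, p i < (x i : WithBot ℤ) ∧ (x i : WithTop ℤ) < q i} := by
  ext x
  simp [openBox, coeZR, WithBot.intToEReal_lt_coe_iff, WithTop.coe_lt_intToEReal_iff]

theorem intNbhd_subset_intBoxBoundary {n : ℕ} {p : Fin n → WithBot ℤ} {q : Fin n → WithTop ℤ}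
    {y : Fin n → ℝ} (hy : y ∈ closure (openBox p q) \ openBox p q) :
    IntNbhd y ⊆ intBoxBoundary p q := by
  intro w hw
  obtain ⟨hy_closure, hy_open⟩ := hy
  have hIcc := Set.mem_univ_pi.mp (closure_openBox_subset hy_closure)
  obtain ⟨i, hi⟩ : ∃ i, (y i : EReal) ∉ Set.Ioo (p i).intToEReal (q i).intToEReal := by
    simpa [openBox] using hy_open
  refine ⟨fun j => ⟨WithBot.le_of_intToEReal_le (hIcc j).1 (hw j),
    WithTop.le_of_le_intToEReal (hIcc j).2 (hw j)⟩, i, ?_⟩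
  rcases (hIcc i).1.eq_or_lt with hp | hp
  · exact Or.inl (WithBot.eq_of_intToEReal_eq hp (hw i))
  · have hq := (hIcc i).2.eq_of_not_lt fun hq => hi ⟨hp, hq⟩
    exact Or.inr (WithTop.eq_of_eq_intToEReal hq (hw i))

theorem stmt15_general {n : ℕ} (f : (Fin n → ℤ) → EReal)
    (hf : IntegrallyConvexFn f)
    (p : Fin n → WithBot ℤ) (q : Fin n → WithTop ℤ)
    (S : Set (Fin n → ℤ))
    (hS : S = {x | ∀ i, p i < ((x i : ℤ) : WithBot ℤ) ∧ ((x i : ℤ) : WithTop ℤ) < q i})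
    (W : Set (Fin n → ℤ))
    (hW : W = {x | (∀ i, p i ≤ ((x i : ℤ) : WithBot ℤ) ∧ ((x i : ℤ) : WithTop ℤ) ≤ q i) ∧
        ∃ i, ((x i : ℤ) : WithBot ℤ) = p i ∨ ((x i : ℤ) : WithTop ℤ) = q i})
    (xh : Fin n → ℤ) (hx1 : xh ∈ S) (hx2 : f xh ≠ ⊤)
    (hmin : ∀ y ∈ W, f xh ≤ f y) :
    ∀ z : Fin n → ℤ, z ∉ S → f xh ≤ f z := by
  intro z hz
  rw [hS, ← preimage_coeZR_openBox] at hx1 hz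
  obtain ⟨a, b, ha, hb, hab, hy⟩ := exists_smul_add_smul_mem_closure_diff isOpen_openBox hx1 hz
  exact hf.le_of_forall_intNbhd_le ha hb hab hx2 fun w hw =>
    hmin w (hW ▸ intNbhd_subset_intBoxBoundary hy hw)

theorem stmt15 {n : ℕ} (f : (Fin n → ℤ) → EReal) (hbot : ∀ z, f z ≠ ⊥)
    (hf : IntegrallyConvexFn f)
    (p : Fin n → WithBot ℤ) (q : Fin n → WithTop ℤ)
    (hpq : ∀ i, ∀ a b : ℤ, p i = (a : WithBot ℤ) → q i = (b : WithTop ℤ) → a ≤ b)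
    (S : Set (Fin n → ℤ))
    (hS : S = {x | ∀ i, p i < ((x i : ℤ) : WithBot ℤ) ∧ ((x i : ℤ) : WithTop ℤ) < q i})
    (W : Set (Fin n → ℤ))
    (hW : W = {x | (∀ i, p i ≤ ((x i : ℤ) : WithBot ℤ) ∧ ((x i : ℤ) : WithTop ℤ) ≤ q i) ∧
        ∃ i, ((x i : ℤ) : WithBot ℤ) = p i ∨ ((x i : ℤ) : WithTop ℤ) = q i})
    (xh : Fin n → ℤ) (hx1 : xh ∈ S) (hx2 : f xh ≠ ⊤)
    (hmin : ∀ y ∈ W, f xh ≤ f y) :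
    ∀ z : Fin n → ℤ, z ∉ S → f xh ≤ f z :=
  stmt15_general f hf p q S hS W hW xh hx1 hx2 hmin
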